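/- arXiv:2512.04896 — 4 statements merged into one kernel-verified Lean document; each statement's English description precedes it below -/
import Mathlib

section
/- Let K be a field such that K[√-1] (the extension of K obtained by adjoining a square root of -1) is algebraically closed. Then K is either algebraically closed or real closed. -/
section AS

variable {K L : Type*} [Field K] [Field L] [Algebra K L]

local notation "aM" => algebraMap K L

lemma span_lemma (i : L) (hi : i ^ 2 = -1)
    (hgen : Algebra.adjoin K ({i} : Set L) = ⊤) (z : L) :
    ∃ x y : K, z = aM x + aM y * i := by
  let S : Subalgebra K L :=
  { carrier := {z | ∃ x y : K, z = aM x + aM y * i}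
    mul_mem' := by
      rintro a b ⟨x, y, rfl⟩ ⟨u, v, rfl⟩
      exact ⟨x*u - y*v, x*v + y*u, by
        simp only [map_sub, map_add, map_mul]
        linear_combination (aM y * aM v) * hi⟩
    one_mem' := ⟨1, 0, by simp⟩
    add_mem' := by
      rintro a b ⟨x, y, rfl⟩ ⟨u, v, rfl⟩
      exact ⟨x+u, y+v, by simp only [map_add]; ring⟩
    zero_mem' := ⟨0, 0, by simp⟩
    algebraMap_mem' := fun r => ⟨r, 0, by simp⟩ }
  have hiS : i ∈ S := ⟨0, 1, by simp⟩
  have : Algebra.adjoin K ({i} : Set L) ≤ S := Algebra.adjoin_le (by simpa using hiS)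
  rw [hgen] at this
  exact this (Algebra.mem_top)

lemma uniq_lemma (i : L) (hni : i ∉ (aM).range) {x y : K}
    (h : aM x + aM y * i = 0) : x = 0 ∧ y = 0 := by
  have hinj := (algebraMap K L).injective
  by_cases hy : y = 0
  · subst hy
    simp at h
    exact ⟨hinj (by simpa using h), rfl⟩
  · exfalso
    apply hni
    have hyL : aM y ≠ 0 := fun h0 => hy (hinj (by simpa using h0))
    refine ⟨-x / y, ?_⟩
    rw [map_div₀, map_neg]
    field_simp
    linear_combination -h

end AS

section AS2
variable {K L : Type*} [Field K] [Field L] [Algebra K L]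
local notation "aM" => algebraMap K L

lemma uniq2_lemma (i : L) (hni : i ∉ (aM).range) {x y u v : K}
    (h : aM x + aM y * i = aM u + aM v * i) : x = u ∧ y = v := by
  have h0 : aM (x - u) + aM (y - v) * i = 0 := by
    simp only [map_sub]; linear_combination h
  obtain ⟨h1, h2⟩ := uniq_lemma i hni h0
  exact ⟨sub_eq_zero.mp h1, sub_eq_zero.mp h2⟩

lemma sq_formula (i : L) (hi : i ^ 2 = -1) (x y : K) :
    (aM x + aM y * i) ^ 2 = aM (x ^ 2 - y ^ 2) + aM (2 * x * y) * i := by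
  simp only [map_sub, map_mul, map_pow, map_ofNat]
  linear_combination (aM y) ^ 2 * hi

lemma as_two_ne_zero (i : L) (hi : i ^ 2 = -1) (hni : i ∉ (aM).range) : (2 : K) ≠ 0 := by
  intro h2
  have h2L : (1 : L) + 1 = 0 := by
    have := congrArg aM h2
    rw [map_ofNat, map_zero] at this
    linear_combination this
  have h1 : (i - 1) * (i + 1) = 0 := by
    linear_combination hi - h2L
  rcases mul_eq_zero.mp h1 with h | h
  · exact hni ⟨1, by rw [map_one]; linear_combination -h⟩
  · exact hni ⟨-1, by rw [map_neg, map_one]; linear_combination -h⟩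

lemma sq_or_neg_sq (i : L) (hi : i ^ 2 = -1)
    (hgen : Algebra.adjoin K ({i} : Set L) = ⊤) (hni : i ∉ (aM).range)
    [IsAlgClosed L] (a : K) :
    (∃ y : K, y ^ 2 = a) ∨ (∃ y : K, y ^ 2 = -a) := by
  obtain ⟨z, hz⟩ := IsAlgClosed.exists_pow_nat_eq (aM a) (n := 2) (by norm_num)
  obtain ⟨x, y, rfl⟩ := span_lemma i hi hgen z
  rw [sq_formula i hi] at hz
  have hz' : aM (x ^ 2 - y ^ 2) + aM (2 * x * y) * i = aM a + aM 0 * i := by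
    rw [hz]; simp
  obtain ⟨h1, h2⟩ := uniq2_lemma i hni hz'
  have hxy : x * y = 0 := by
    have h2' : (2 : K) * (x * y) = 0 := by linear_combination h2
    rcases mul_eq_zero.mp h2' with h | h
    · exact absurd h (as_two_ne_zero i hi hni)
    · exact h
  rcases mul_eq_zero.mp hxy with h | h
  · right; exact ⟨y, by rw [← h1, h]; ring⟩
  · left; exact ⟨x, by rw [← h1, h]; ring⟩

lemma sum_sq (i : L) (hi : i ^ 2 = -1)
    (hgen : Algebra.adjoin K ({i} : Set L) = ⊤) (hni : i ∉ (aM).range)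
    [IsAlgClosed L] (a b : K) :
    ∃ c : K, c ^ 2 = a ^ 2 + b ^ 2 := by
  obtain ⟨z, hz⟩ := IsAlgClosed.exists_pow_nat_eq (aM a + aM b * i) (n := 2) (by norm_num)
  obtain ⟨x, y, rfl⟩ := span_lemma i hi hgen z
  rw [sq_formula i hi] at hz
  obtain ⟨h1, h2⟩ := uniq2_lemma i hni hz
  exact ⟨x ^ 2 + y ^ 2, by rw [← h1, ← h2]; ring⟩

lemma neg_one_not_sq (i : L) (hi : i ^ 2 = -1) (hni : i ∉ (aM).range) :
    ¬ ∃ c : K, c ^ 2 = -1 := by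
  rintro ⟨c, hc⟩
  have hL : (aM c - i) * (aM c + i) = 0 := by
    have : (aM c) ^ 2 = -1 := by rw [← map_pow, hc]; simp
    linear_combination this - hi
  rcases mul_eq_zero.mp hL with h | h
  · exact hni ⟨c, sub_eq_zero.mp h⟩
  · exact hni ⟨-c, by rw [map_neg]; linear_combination -h⟩

end AS2

section AS3
variable {K L : Type*} [Field K] [Field L] [Algebra K L]
local notation "aM" => algebraMap K L
open Polynomial

lemma quad_poly (i : L) (hi : i ^ 2 = -1) (x y : K) :
    ∃ q : K[X], q.Monic ∧ q.natDegree = 2 ∧ aeval (aM x + aM y * i) q = 0 := by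
  refine ⟨X ^ 2 - C (2 * x) * X + C (x ^ 2 + y ^ 2), ?_, ?_, ?_⟩
  · monicity!
  · compute_degree!
  · simp only [map_add, map_sub, map_mul, map_pow, aeval_X, aeval_C, map_ofNat]
    linear_combination (aM y) ^ 2 * hi

lemma integral_lemma (i : L) (hi : i ^ 2 = -1)
    (hgen : Algebra.adjoin K ({i} : Set L) = ⊤) (z : L) : IsIntegral K z := by
  obtain ⟨x, y, rfl⟩ := span_lemma i hi hgen z
  obtain ⟨q, hq1, hq2, hq3⟩ := quad_poly i hi x y
  exact ⟨q, hq1, hq3⟩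

lemma odd_root (i : L) (hi : i ^ 2 = -1)
    (hgen : Algebra.adjoin K ({i} : Set L) = ⊤) (hni : i ∉ (aM).range)
    [IsAlgClosed L] :
    ∀ n : ℕ, Odd n → ∀ p : K[X], p.natDegree = n → ∃ x : K, p.eval x = 0 := by
  intro n
  induction n using Nat.strong_induction_on with
  | _ n IH =>
  intro hodd p hdeg
  have hn1 : n % 2 = 1 := Nat.odd_iff.mp hodd
  have hpos : 0 < n := by omega
  have hp0 : p ≠ 0 := by rintro rfl; rw [natDegree_zero] at hdeg; omega
  have hmapdeg : (p.map (aM)).degree ≠ 0 := by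
    rw [degree_map_eq_of_injective (algebraMap K L).injective,
      degree_eq_natDegree hp0, hdeg]
    exact_mod_cast hpos.ne'
  obtain ⟨z, hz⟩ := IsAlgClosed.exists_root (p.map (aM)) hmapdeg
  have haev : aeval z p = 0 := by rwa [aeval_def, ← eval_map]
  by_cases hzr : z ∈ (aM).range
  · obtain ⟨t, rfl⟩ := hzr
    refine ⟨t, ?_⟩
    have h0 : aM (p.eval t) = 0 := by
      rw [← eval₂_at_apply, ← eval_map]; exact hz
    exact (algebraMap K L).injective (by simpa using h0)
  · have hint : IsIntegral K z := integral_lemma i hi hgen z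
    have hmdvd : minpoly K z ∣ p := minpoly.dvd K z haev
    obtain ⟨x, y, hxy⟩ := span_lemma i hi hgen z
    obtain ⟨q, hq1, hq2, hq3⟩ := quad_poly i hi x y
    have hqdvd : minpoly K z ∣ q := minpoly.dvd K z (hxy ▸ hq3)
    have hq0 : q ≠ 0 := hq1.ne_zero
    have hmle : (minpoly K z).natDegree ≤ 2 := hq2 ▸ natDegree_le_of_dvd hqdvd hq0
    have hmpos : 0 < (minpoly K z).natDegree := minpoly.natDegree_pos hint
    have hmne1 : (minpoly K z).natDegree ≠ 1 := by
      intro h1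
      apply hzr
      rw [← minpoly.degree_eq_one_iff]
      rw [degree_eq_natDegree (minpoly.ne_zero hint), h1]
      rfl
    have hm2 : (minpoly K z).natDegree = 2 := by omega
    have hn2 : 2 ≤ n := hdeg ▸ hm2 ▸ natDegree_le_of_dvd hmdvd hp0
    obtain ⟨r, hr⟩ := hmdvd
    have hr0 : r ≠ 0 := by rintro rfl; rw [mul_zero] at hr; exact hp0 hr
    have hrdeg : r.natDegree = n - 2 := by
      have := natDegree_mul (minpoly.ne_zero hint) hr0
      rw [← hr, hdeg, hm2] at this
      omega
    obtain ⟨x0, hx0⟩ := IH (n - 2) (by omega) (Nat.odd_iff.mpr (by omega)) r hrdeg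
    exact ⟨x0, by rw [hr, eval_mul, hx0, mul_zero]⟩
end AS3

/-- A field is real closed: it admits a linear ordering making it an ordered field
in which every nonnegative element is a square and every odd-degree polynomial has a root. -/
def IsRealClosedField (K : Type*) [Field K] : Prop :=
  ∃ le : K → K → Prop, IsLinearOrder K le ∧
    (∀ a b c : K, le a b → le (a + c) (b + c)) ∧
    (∀ a b : K, le 0 a → le 0 b → le 0 (a * b)) ∧
    (∀ x : K, le 0 x → ∃ y : K, y ^ 2 = x) ∧
    (∀ f : Polynomial K, Odd f.natDegree → ∃ x : K, f.eval x = 0)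

open Polynomial

/-- Artin–Schreier: if K(√-1) is algebraically closed then K is algebraically closed
or real closed. -/
theorem stmt_0 (K : Type*) [Field K] (L : Type*) [Field L] [Algebra K L]
    (i : L) (hi : i ^ 2 = -1) (hgen : Algebra.adjoin K ({i} : Set L) = ⊤)
    (hL : IsAlgClosed L) :
    IsAlgClosed K ∨ IsRealClosedField K := by
  haveI := hL
  by_cases hzr : i ∈ (algebraMap K L).range
  · -- K ≃ L, so K is algebraically closed
    left
    have hsurj : Function.Surjective (algebraMap K L) := by
      intro z
      have hle : Algebra.adjoin K ({i} : Set L) ≤ ⊥ :=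
        Algebra.adjoin_le (by simpa [Algebra.mem_bot] using hzr)
      rw [hgen] at hle
      have : z ∈ (⊥ : Subalgebra K L) := hle Algebra.mem_top
      rwa [Algebra.mem_bot] at this
    apply IsAlgClosed.of_exists_root
    intro p hmonic hirr
    have hdeg0 : p.degree ≠ 0 := fun h =>
      hirr.not_isUnit ((isUnit_iff_degree_eq_zero).mpr h)
    have hmapdeg : (p.map (algebraMap K L)).degree ≠ 0 := by
      rwa [degree_map_eq_of_injective (algebraMap K L).injective]
    obtain ⟨z, hz⟩ := IsAlgClosed.exists_root _ hmapdeg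
    obtain ⟨t, rfl⟩ := hsurj z
    refine ⟨t, ?_⟩
    have h0 : algebraMap K L (p.eval t) = 0 := by
      rw [← eval₂_at_apply, ← eval_map]; exact hz
    exact (algebraMap K L).injective (by simpa using h0)
  · -- K is real closed
    right
    have hsum : ∀ a b : K, ∃ c : K, c ^ 2 = a ^ 2 + b ^ 2 := sum_sq i hi hgen hzr
    have htot : ∀ a : K, (∃ y : K, y ^ 2 = a) ∨ (∃ y : K, y ^ 2 = -a) :=
      sq_or_neg_sq i hi hgen hzr
    have hneg : ¬ ∃ c : K, c ^ 2 = -1 := neg_one_not_sq i hi hzr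
    refine ⟨fun a b => ∃ y : K, y ^ 2 = b - a,
      { refl := ?_, trans := ?_, antisymm := ?_, total := ?_ }, ?_, ?_, ?_, ?_⟩
    · -- refl
      intro a; exact ⟨0, by ring⟩
    · -- trans
      rintro a b c ⟨u, hu⟩ ⟨v, hv⟩
      obtain ⟨w, hw⟩ := hsum u v
      exact ⟨w, by rw [hw]; linear_combination hu + hv⟩
    · -- antisymm
      rintro a b ⟨u, hu⟩ ⟨v, hv⟩
      by_cases hu0 : u = 0
      · subst hu0
        rw [zero_pow two_ne_zero] at hu
        linear_combination hu
      · exfalso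
        apply hneg
        have hba : b - a ≠ 0 := by
          intro h; exact hu0 (pow_eq_zero_iff two_ne_zero |>.mp (by rw [hu, h]))
        refine ⟨v / u, ?_⟩
        rw [div_pow, hu, hv, div_eq_iff hba]
        ring
    · -- total
      intro a b
      rcases htot (b - a) with ⟨y, hy⟩ | ⟨y, hy⟩
      · exact Or.inl ⟨y, hy⟩
      · exact Or.inr ⟨y, by rw [hy]; ring⟩
    · -- add compat
      rintro a b c ⟨y, hy⟩
      exact ⟨y, by linear_combination hy⟩
    · -- mul
      rintro a b ⟨u, hu⟩ ⟨v, hv⟩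
      exact ⟨u * v, by rw [mul_pow, hu, hv]; ring⟩
    · -- sqrt
      rintro x ⟨y, hy⟩
      exact ⟨y, by linear_combination hy⟩
    · -- odd degree root
      intro f hodd
      exact odd_root i hi hgen hzr f.natDegree hodd f rfl
end

section
/- Let K be a field such that K[√-1] is not algebraically closed. Then no finite field extension of K is algebraically closed. -/
/-!
Artin–Schreier. Embedding `K(i)` into `M`, it suffices to show that a field `F` containing a
square root of `-1` and having an algebraically closed finite extension `M` is algebraically
closed. Such an `F` is perfect (a norm argument), so `M/F` is Galois, and if `[M : F] > 1` the
fixed field `E` of an automorphism of prime order `q` has `M/E` cyclic of degree `q`.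

If `char E = q`, a generator `τ` gives `α` with `τ α = α + 1` (as `τ - 1` is nilpotent),
so `α ^ q - α ∈ E`. But every `Tr t ∈ E` is `c ^ q - c` for `c = Tr β`, where `β ^ q - β = t`
in `M`, since the trace commutes with Frobenius. Then `α - c` is a root of `X ^ q - X`, hence
lies in the prime field and is fixed by `τ`, although `τ (α - c) = α - c + 1`.

Otherwise `E` contains the `q`-th roots of unity, and Kummer theory gives `M = E(α)` with
`α ^ q = a ∈ E` not a `q`-th power in `E`. Since `N(α) = (-1) ^ (q + 1) a`, a `q`-th root `y`
of `α` gives `a = (w N(y)) ^ q` with `w ^ q = (-1) ^ (q + 1)`; for `q = 2` take `w = √-1`.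
-/

open Polynomial IntermediateField Module

theorem exists_pow_char_eq_of_pow_char_pow_eq {F M : Type*} [Field F] [Field M] [Algebra F M]
    [FiniteDimensional F M] {p : ℕ} (hp : p.Prime) [CharP F p] {a : F} {x : M} {n : ℕ}
    (hx : x ^ p ^ n = algebraMap F M a) (hn : finrank F M < p ^ n) : ∃ b : F, b ^ p = a := by
  have : ExpChar F p := ExpChar.prime hp
  have hd : 0 < finrank F M := finrank_pos
  obtain ⟨k, u, hpu, hku⟩ := Nat.exists_eq_pow_mul_and_not_dvd hd.ne' p hp.ne_one
  have hkn : k < n :=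
    (Nat.pow_lt_pow_iff_right hp.one_lt).mp <| (Nat.le_of_dvd hd ⟨u, hku⟩).trans_lt hn
  -- Taking norms, `N(x) ^ p ^ n = a ^ (p ^ k * u)`; extracting the `p ^ k`-th root leaves
  -- `a ^ u` a `p`-th power, and `u` is prime to `p`.
  have hnorm : (a ^ u) ^ p ^ k = (Algebra.norm F x ^ p ^ (n - k)) ^ p ^ k := by
    rw [← pow_mul, mul_comm, ← hku, ← Algebra.norm_algebraMap, ← hx, map_pow, ← pow_mul,
      ← pow_add, Nat.sub_add_cancel hkn.le]
  have hau : a ^ u = (Algebra.norm F x ^ p ^ (n - k - 1)) ^ p := by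
    rw [iterateFrobenius_inj F p k hnorm, ← pow_mul, ← pow_succ, Nat.sub_add_cancel (by omega)]
  have hcop : u.Coprime p := Nat.coprime_comm.mp (hp.coprime_iff_not_dvd.mpr hpu)
  exact (pow_mem_range_pow_of_coprime hcop a).mp ⟨_, hau.symm⟩

theorem perfectField_of_finite_of_isAlgClosed (F M : Type*) [Field F] [Field M] [Algebra F M]
    [FiniteDimensional F M] [IsAlgClosed M] : PerfectField F := by
  obtain _ | ⟨p, hp, _⟩ := CharP.exists' F
  · exact .ofCharZero
  have : PerfectRing F p := .ofSurjective F p fun a => by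
    obtain ⟨x, hx⟩ :=
      IsAlgClosed.exists_pow_nat_eq (algebraMap F M a) (pow_pos hp.out.pos (finrank F M))
    exact exists_pow_char_eq_of_pow_char_pow_eq hp.out hx (Nat.lt_pow_self hp.out.one_lt)
  exact PerfectRing.toPerfectField F p

theorem isGalois_of_finite_of_isAlgClosed (F M : Type*) [Field F] [Field M] [Algebra F M]
    [FiniteDimensional F M] [IsAlgClosed M] : IsGalois F M := by
  have := perfectField_of_finite_of_isAlgClosed F M
  have : IsAlgClosure F M := ⟨inferInstance, .of_finite F M⟩
  have := IsAlgClosure.normal F M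
  exact ⟨⟩

theorem Module.End.exists_apply_ne_zero_and_apply_apply_eq_zero {R V : Type*} [Semiring R]
    [AddCommMonoid V] [Module R V] {f : Module.End R V} (hf : IsNilpotent f) (hf0 : f ≠ 0) :
    ∃ x, f x ≠ 0 ∧ f (f x) = 0 := by
  by_contra! h
  obtain ⟨x, hx⟩ : ∃ x, f x ≠ 0 := by
    by_contra! h'
    exact hf0 (LinearMap.ext h')
  have hiter : ∀ k : ℕ, f ((f ^ k) x) ≠ 0 := by
    intro k
    induction k with
    | zero => simpa using hx
    | succ k ih => simpa [pow_succ', Module.End.mul_apply] using h _ ih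
  obtain ⟨n, hn⟩ := hf
  exact hiter n (by rw [← Module.End.mul_apply, ← pow_succ', pow_succ, hn, zero_mul,
    LinearMap.zero_apply])

theorem AlgEquiv.exists_apply_eq_add_one {F M : Type*} [Field F] [Field M] [Algebra F M]
    (p : ℕ) [Fact p.Prime] [CharP F p] (τ : M ≃ₐ[F] M) (hτ : τ ^ p = 1) (hτ1 : τ ≠ 1) :
    ∃ α : M, τ α = α + 1 := by
  have : CharP (Module.End F M) p :=
    charP_of_injective_algebraMap (algebraMap F (Module.End F M)).injective p
  set δ : Module.End F M := τ.toLinearMap - 1 with hδ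
  have hδ_apply (x : M) : δ x = τ x - x := rfl
  have hnil : IsNilpotent δ := ⟨p, by
    rw [hδ, sub_pow_char_of_commute p (Commute.one_right _), one_pow, ← AlgEquiv.pow_toLinearMap,
      hτ, AlgEquiv.one_toLinearMap, sub_self]⟩
  have hδ0 : δ ≠ 0 := fun h => hτ1 <| AlgEquiv.ext fun x => by
    simpa [hδ_apply, sub_eq_zero] using LinearMap.congr_fun h x
  obtain ⟨x, hx, hxx⟩ := Module.End.exists_apply_ne_zero_and_apply_apply_eq_zero hnil hδ0
  rw [hδ_apply, sub_eq_zero] at hxx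
  refine ⟨x / δ x, ?_⟩
  rw [map_div₀, hxx, div_add_one hx, hδ_apply, add_sub_cancel]

theorem Algebra.trace_pow_char {F M : Type*} [Field F] [Field M] [Algebra F M]
    [FiniteDimensional F M] [IsGalois F M] (p : ℕ) [ExpChar F p] (x : M) :
    Algebra.trace F M (x ^ p) = Algebra.trace F M x ^ p := by
  have : ExpChar M p := expChar_of_injective_algebraMap (algebraMap F M).injective p
  apply (algebraMap F M).injective
  simp only [map_pow, trace_eq_sum_automorphisms, sum_pow_char]

theorem Polynomial.degree_X_pow_sub_X_sub_C {R : Type*} [Ring R] [Nontrivial R] {n : ℕ}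
    (hn : 1 < n) (r : R) : (X ^ n - X - C r : R[X]).degree = n := by
  rw [sub_sub, degree_sub_eq_left_of_degree_lt] <;> rw [degree_X_pow]
  exact (degree_X_add_C r).trans_lt (by exact_mod_cast hn)

theorem exists_pow_char_sub_eq_of_isAlgClosed {F : Type*} (M : Type*) [Field F] [Field M]
    [Algebra F M] [FiniteDimensional F M] [IsGalois F M] [IsAlgClosed M] (p : ℕ) [Fact p.Prime]
    [CharP F p] (a : F) : ∃ c : F, c ^ p - c = a := by
  obtain ⟨t, rfl⟩ := Algebra.trace_surjective F M a
  obtain ⟨β, hβ⟩ := IsAlgClosed.exists_root (X ^ p - X - C t) (by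
    rw [degree_X_pow_sub_X_sub_C (Fact.out : p.Prime).one_lt]; exact_mod_cast NeZero.ne p)
  refine ⟨Algebra.trace F M β, ?_⟩
  rw [← Algebra.trace_pow_char, ← map_sub]
  congr 1
  simpa [sub_eq_zero] using hβ

theorem finrank_ne_char_of_isAlgClosed (F M : Type*) [Field F] [Field M] [Algebra F M]
    [FiniteDimensional F M] [IsGalois F M] [IsAlgClosed M] (p : ℕ) [Fact p.Prime] [CharP F p] :
    finrank F M ≠ p := by
  intro hrank
  have : CharP M p := (Algebra.charP_iff F M p).mp ‹_›
  have hcard : Nat.card Gal(M/F) = p := by rw [IsGalois.card_aut_eq_finrank, hrank]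
  have := isCyclic_of_prime_card hcard
  obtain ⟨τ, hτ⟩ := IsCyclic.exists_generator (α := Gal(M/F))
  have hord : orderOf τ = p := (orderOf_eq_card_of_forall_mem_zpowers hτ).trans hcard
  obtain ⟨α, hα⟩ := τ.exists_apply_eq_add_one p (hord ▸ pow_orderOf_eq_one τ) <| by
    rintro rfl
    exact (Fact.out : p.Prime).ne_one (orderOf_one.symm.trans hord).symm
  have hfix : ∀ σ : Gal(M/F), σ (α ^ p - α) = α ^ p - α := by
    have hτfix : τ ∈ MulAction.stabilizer Gal(M/F) (α ^ p - α) := by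
      rw [MulAction.mem_stabilizer_iff, AlgEquiv.smul_def, map_sub, map_pow, hα, add_pow_char]
      ring
    exact fun σ => Subgroup.zpowers_le.mpr hτfix (hτ σ)
  obtain ⟨a, ha⟩ := (IsGalois.mem_range_algebraMap_iff_fixed _).mpr hfix
  obtain ⟨c, rfl⟩ := exists_pow_char_sub_eq_of_isAlgClosed M p a
  have hbot : α - algebraMap F M c ∈ (⊥ : Subfield M) := by
    rw [Subfield.mem_bot_iff_pow_eq_self M p, sub_pow_char]
    rw [map_sub, map_pow] at ha
    linear_combination -ha
  obtain ⟨n, hn⟩ := (mem_bot_iff_intCast p M).mp hbot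
  have hτn := map_intCast τ n
  rw [hn, map_sub, hα, AlgEquiv.commutes] at hτn
  exact one_ne_zero (by linear_combination hτn)

theorem exists_isPrimitiveRoot_of_finrank_eq_prime {F M : Type*} [Field F] [Field M]
    [Algebra F M] [FiniteDimensional F M] [IsAlgClosed M] {q : ℕ} (hq : q.Prime)
    (hrank : finrank F M = q) (hchar : (q : M) ≠ 0) : ∃ z : F, IsPrimitiveRoot z q := by
  have : NeZero (q : M) := ⟨hchar⟩
  obtain ⟨ζ, hζ⟩ := HasEnoughRootsOfUnity.exists_primitiveRoot M q
  have hint : IsIntegral F ζ := .of_finite F ζ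
  -- `ζ` is a root of the `q`-th cyclotomic polynomial, of degree `q - 1 < q`.
  have hlt : finrank F F⟮ζ⟯ < q := by
    rw [adjoin.finrank hint]
    refine (natDegree_le_of_dvd (minpoly.dvd F ζ ?_) (cyclotomic_ne_zero q F)).trans_lt ?_
    · simpa [aeval_def, eval₂_eq_eval_map, map_cyclotomic] using hζ.isRoot_cyclotomic hq.pos
    · rw [natDegree_cyclotomic]
      exact Nat.totient_lt q hq.one_lt
  have hdvd : finrank F F⟮ζ⟯ ∣ q := hrank ▸ Dvd.intro _ (finrank_mul_finrank F F⟮ζ⟯ M)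
  obtain ⟨z, hz⟩ := mem_bot.mp <| finrank_eq_one_iff.mp
    ((hq.eq_one_or_self_of_dvd _ hdvd).resolve_right hlt.ne) ▸ mem_adjoin_simple_self F ζ
  exact ⟨z, (hz ▸ hζ).of_map_of_injective (algebraMap F M).injective⟩

theorem Algebra.norm_eq_of_minpoly_eq_X_pow_sub_C {F M : Type*} [Field F] [Field M]
    [Algebra F M] {x : M} {n : ℕ} (hn : n ≠ 0) {a : F} (hx : minpoly F x = X ^ n - C a) :
    Algebra.norm F x = ((-1) ^ (n + 1) * a) ^ finrank F⟮x⟯ M := by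
  have hint : IsIntegral F x := by
    by_contra h
    exact (monic_X_pow_sub_C a hn).ne_zero (hx.symm.trans (minpoly.eq_zero h))
  have hgen : AdjoinSimple.gen F x = (IntermediateField.adjoin.powerBasis hint).gen := rfl
  rw [Algebra.norm_eq_norm_adjoin, hgen, Algebra.PowerBasis.norm_gen_eq_coeff_zero_minpoly]
  simp [minpoly_gen, hx, Ne.symm hn, pow_succ]

theorem finrank_ne_prime_of_isAlgClosed {F M : Type*} [Field F] [Field M] [Algebra F M]
    [FiniteDimensional F M] [IsGalois F M] [IsAlgClosed M] {q : ℕ} (hq : q.Prime)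
    (hchar : (q : M) ≠ 0) {j : F} (hj : j ^ 2 = -1) : finrank F M ≠ q := by
  intro hrank
  have : Fact q.Prime := ⟨hq⟩
  obtain ⟨z, hz⟩ := exists_isPrimitiveRoot_of_finrank_eq_prime hq hrank hchar
  have : IsCyclic Gal(M/F) :=
    isCyclic_of_prime_card (by rw [IsGalois.card_aut_eq_finrank, hrank])
  obtain ⟨α, ⟨a, ha⟩, hadj⟩ := exists_root_adjoin_eq_top_of_isCyclic F M
    ⟨z, by rwa [hrank, mem_primitiveRoots hq.pos]⟩
  have hirr := irreducible_X_pow_sub_C_of_root_adjoin_eq_top ha.symm hadj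
  have hmin : minpoly F α = X ^ q - C a := by
    rw [← hrank]
    exact (minpoly.eq_of_irreducible_of_monic hirr (by simp [← ha])
      (monic_X_pow_sub_C a finrank_pos.ne')).symm
  rw [hrank] at hirr
  have hnorm : Algebra.norm F α = (-1) ^ (q + 1) * a := by
    rw [Algebra.norm_eq_of_minpoly_eq_X_pow_sub_C hq.ne_zero hmin, hadj,
      IntermediateField.finrank_top, pow_one]
  obtain ⟨w, hw⟩ : ∃ w : F, w ^ q = (-1) ^ (q + 1) := by
    rcases hq.eq_two_or_odd' with rfl | hodd
    · exact ⟨j, by rw [hj]; norm_num⟩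
    · exact ⟨1, by rw [one_pow, hodd.add_one.neg_one_pow]⟩
  obtain ⟨y, hy⟩ := IsAlgClosed.exists_pow_nat_eq α hq.pos
  refine pow_ne_of_irreducible_X_pow_sub_C hirr dvd_rfl hq.ne_one (w * Algebra.norm F y) ?_
  rw [mul_pow, ← map_pow, hy, hnorm, hw, ← mul_assoc, ← pow_add, ← two_mul, pow_mul,
    neg_one_sq, one_pow, one_mul]

theorem finrank_eq_one_of_isAlgClosed (F M : Type*) [Field F] [Field M] [Algebra F M]
    [FiniteDimensional F M] [IsAlgClosed M] {j : F} (hj : j ^ 2 = -1) : finrank F M = 1 := by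
  have := isGalois_of_finite_of_isAlgClosed F M
  by_contra hne
  obtain ⟨q, hq, hqdvd⟩ := Nat.exists_prime_and_dvd hne
  have : Fact q.Prime := ⟨hq⟩
  rw [← IsGalois.card_aut_eq_finrank] at hqdvd
  obtain ⟨σ, hσ⟩ := exists_prime_orderOf_dvd_card' q hqdvd
  let E := fixedField (Subgroup.zpowers σ)
  have hrank : finrank E M = q := by
    rw [finrank_fixedField_eq_card, Nat.card_zpowers, hσ]
  by_cases hchar : (q : M) = 0
  · have : CharP E q :=
      (Algebra.charP_iff E M q).mpr ((CharP.charP_iff_prime_eq_zero hq).mpr hchar)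
    exact finrank_ne_char_of_isAlgClosed E M q hrank
  · exact finrank_ne_prime_of_isAlgClosed hq hchar
      (j := algebraMap F E j) (by rw [← map_pow, hj, map_neg, map_one]) hrank

theorem isAlgClosed_of_ringEquiv {A B : Type*} [Field A] [Field B] (e : A ≃+* B)
    [IsAlgClosed B] : IsAlgClosed A where
  splits p := by
    simpa [Polynomial.map_map] using
      (IsAlgClosed.splits (p.map (e : A →+* B))).map (e.symm : B →+* A)

theorem isAlgClosed_of_finite_of_sq_eq_neg_one (F M : Type*) [Field F] [Field M] [Algebra F M]
    [FiniteDimensional F M] [IsAlgClosed M] {j : F} (hj : j ^ 2 = -1) : IsAlgClosed F :=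
  isAlgClosed_of_ringEquiv <| .ofBijective (algebraMap F M) <|
    Algebra.finrank_eq_one_iff_bijective_algebraMap.mp (finrank_eq_one_of_isAlgClosed F M hj)

/-- If K(√-1) is not algebraically closed, then no finite field extension of K
is algebraically closed. -/
theorem stmt_1 (K : Type*) [Field K] (L : Type*) [Field L] [Algebra K L]
    (i : L) (hi : i ^ 2 = -1) (hgen : Algebra.adjoin K ({i} : Set L) = ⊤)
    (hL : ¬ IsAlgClosed L)
    (M : Type*) [Field M] [Algebra K M] [FiniteDimensional K M] :
    ¬ IsAlgClosed M := by
  intro hM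
  have hi_alg : IsAlgebraic K i :=
    ⟨X ^ 2 + C 1, (monic_X_pow_add_C 1 two_ne_zero).ne_zero, by simp [hi]⟩
  have : Algebra.IsAlgebraic K L :=
    ⟨fun x => Algebra.isAlgebraic_adjoin_singleton_iff.mpr hi_alg x (hgen ▸ Algebra.mem_top)⟩
  let : Algebra L M := (IsAlgClosed.lift : L →ₐ[K] M).toAlgebra
  have : IsScalarTower K L M := .of_algebraMap_eq fun x => (AlgHom.commutes _ x).symm
  have : FiniteDimensional L M := .of_restrictScalars_finite K L M
  exact hL (isAlgClosed_of_finite_of_sq_eq_neg_one L M hi)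
end

section
/- Let K be a field such that K[√-1] is not algebraically closed. Then there exist a finite separable field extension L/K and a prime number p such that L admits a normal field extension of degree p. -/
/-!
If `K` is perfect, `Ω = K̄` is Galois over `K` and larger than `K`, so it contains a finite Galois
extension `E / K` of degree `n > 1`. For a prime `p ∣ n`, the fixed field `L` of a Sylow
`p`-subgroup of `Gal(E/K)` makes `E / L` Galois of degree `p ^ k` with `k ≥ 1`; a group of order
`p ^ k` has a normal subgroup of index `p`, whose fixed field is normal of degree `p` over `L`.

If `K` is imperfect of characteristic `p`, some `a ∈ K` is not a `p`-th power, and `K(a^{1/p})`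
is purely inseparable, hence normal, of degree `p` over `K`.
-/

open IntermediateField Module Polynomial

theorem Subgroup.exists_normal_index_eq_of_card_eq_pow {G : Type*} [Group G] [Finite G]
    {p k : ℕ} [hp : Fact p.Prime] (hG : Nat.card G = p ^ (k + 1)) :
    ∃ H : Subgroup G, H.Normal ∧ H.index = p := by
  obtain ⟨H, hH⟩ := Sylow.exists_subgroup_card_pow_prime p (n := k)
    (hG ▸ pow_dvd_pow p k.le_succ)
  have hindex : H.index = p := by
    have := H.card_mul_index
    rw [hH, hG, pow_succ] at this
    exact Nat.eq_of_mul_eq_mul_left (pow_pos hp.out.pos k) this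
  refine ⟨H, Subgroup.normal_of_index_eq_minFac_card ?_, hindex⟩
  rw [hindex, hG, hp.out.pow_minFac k.succ_ne_zero]

theorem IsGalois.exists_normal_finrank_eq_of_finrank_eq_pow (L E : Type*) [Field L] [Field E]
    [Algebra L E] [IsGalois L E] [FiniteDimensional L E] {p k : ℕ} [Fact p.Prime]
    (h : finrank L E = p ^ (k + 1)) :
    ∃ M : IntermediateField L E, Normal L M ∧ finrank L M = p := by
  obtain ⟨H, hH, hindex⟩ := Subgroup.exists_normal_index_eq_of_card_eq_pow
    (G := E ≃ₐ[L] E) (IsGalois.card_aut_eq_finrank L E ▸ h)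
  exact ⟨fixedField H, (IsGalois.of_fixedField_normal_subgroup H).to_normal, by
    rw [finrank_eq_fixingSubgroup_index, fixingSubgroup_fixedField, hindex]⟩

theorem IntermediateField.finrank_extendScalars_lift {K Ω : Type*} [Field K] [Field Ω]
    [Algebra K Ω] {E : IntermediateField K Ω} [FiniteDimensional K E]
    (L : IntermediateField K E) :
    finrank (lift L) (extendScalars (lift_le L)) = finrank L E := by
  have hL : finrank K (lift L) = finrank K L := (liftAlgEquiv L).toLinearEquiv.finrank_eq.symm
  have h₁ := finrank_mul_finrank K (lift L) (extendScalars (lift_le L))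
  have h₂ := finrank_mul_finrank K L E
  rw [hL] at h₁
  exact Nat.eq_of_mul_eq_mul_left finrank_pos (h₁.trans h₂.symm)

theorem IsGalois.exists_le_finrank_extendScalars_eq_pow {K Ω : Type*} [Field K] [Field Ω]
    [Algebra K Ω] (E : IntermediateField K Ω) [FiniteDimensional K E] [IsGalois K E]
    {p : ℕ} [hp : Fact p.Prime] (hdvd : p ∣ finrank K E) :
    ∃ (L : IntermediateField K Ω) (h : L ≤ E) (k : ℕ),
      finrank L (extendScalars h) = p ^ (k + 1) := by
  classical
  obtain ⟨P⟩ : Nonempty (Sylow p (E ≃ₐ[K] E)) := inferInstance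
  have hP : finrank (fixedField (P : Subgroup (E ≃ₐ[K] E))) E =
      p ^ (finrank K E).factorization p := by
    rw [finrank_fixedField_eq_card, P.card_eq_multiplicity, IsGalois.card_aut_eq_finrank]
  obtain ⟨k, hk⟩ := Nat.exists_eq_succ_of_ne_zero
    (hp.out.factorization_pos_of_dvd finrank_pos.ne' hdvd).ne'
  exact ⟨_, lift_le _, k, by rw [finrank_extendScalars_lift, hP, hk]⟩

def HasNormalPrimeExtOfFiniteSeparable (K Ω : Type*) [Field K] [Field Ω] [Algebra K Ω] : Prop :=
  ∃ p : ℕ, p.Prime ∧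
    ∃ L : IntermediateField K Ω, FiniteDimensional K L ∧ Algebra.IsSeparable K L ∧
      ∃ M : IntermediateField L Ω, Normal L M ∧ finrank L M = p

theorem hasNormalPrimeExtOfFiniteSeparable_of_isGalois (K Ω : Type*) [Field K] [Field Ω]
    [Algebra K Ω] [IsGalois K Ω] (hbot : (⊥ : IntermediateField K Ω) ≠ ⊤) :
    HasNormalPrimeExtOfFiniteSeparable K Ω := by
  obtain ⟨x, -, hx⟩ := SetLike.exists_of_lt (lt_top_iff_ne_top.2 hbot)
  have : FiniteDimensional K K⟮x⟯ :=
    adjoin.finiteDimensional (Algebra.IsIntegral.isIntegral x)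
  set E := normalClosure K K⟮x⟯ Ω
  have hE : finrank K E ≠ 1 := fun h =>
    hx ((finrank_eq_one_iff.1 h) ▸ K⟮x⟯.le_normalClosure (mem_adjoin_simple_self K x))
  set p := (finrank K E).minFac
  have hp : Fact p.Prime := ⟨Nat.minFac_prime hE⟩
  obtain ⟨L, hLE, k, hk⟩ := IsGalois.exists_le_finrank_extendScalars_eq_pow E (Nat.minFac_dvd _)
  have : IsGalois K (extendScalars hLE) := inferInstanceAs (IsGalois K E)
  have : FiniteDimensional K (extendScalars hLE) := inferInstanceAs (FiniteDimensional K E)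
  have : FiniteDimensional L (extendScalars hLE) := FiniteDimensional.right K L _
  have : IsGalois L (extendScalars hLE) := IsGalois.tower_top_of_isGalois K L _
  obtain ⟨M, hM, hMp⟩ := IsGalois.exists_normal_finrank_eq_of_finrank_eq_pow L _ hk
  exact ⟨p, hp.out, L, FiniteDimensional.left K L (extendScalars hLE),
    Algebra.isSeparable_tower_bot_of_isSeparable K L Ω, lift M,
    Normal.of_algEquiv (liftAlgEquiv M), (liftAlgEquiv M).toLinearEquiv.finrank_eq ▸ hMp⟩

theorem normal_adjoin_simple_and_finrank_eq_of_pow_eq {F Ω : Type*} [Field F] [Field Ω]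
    [Algebra F Ω] {p : ℕ} [hp : Fact p.Prime] [CharP F p] {a : F} (ha : ∀ b : F, b ^ p ≠ a)
    {y : Ω} (hy : y ^ p = algebraMap F Ω a) : Normal F F⟮y⟯ ∧ finrank F F⟮y⟯ = p := by
  have hroot : aeval y (X ^ p - C a) = 0 := by simp [hy]
  have hmonic : (X ^ p - C a).Monic := monic_X_pow_sub_C a hp.out.ne_zero
  have hminpoly : minpoly F y = X ^ p - C a :=
    (minpoly.eq_of_irreducible_of_monic (X_pow_sub_C_irreducible_of_prime hp.out ha) hroot
      hmonic).symm
  have : IsPurelyInseparable F F⟮y⟯ :=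
    (isPurelyInseparable_adjoin_simple_iff_pow_mem F Ω p).2 ⟨1, by rw [pow_one, hy]; exact ⟨a, rfl⟩⟩
  refine ⟨inferInstance, ?_⟩
  rw [adjoin.finrank ⟨_, hmonic, hroot⟩, hminpoly, natDegree_X_pow_sub_C]

theorem hasNormalPrimeExtOfFiniteSeparable_of_not_perfectField (K Ω : Type*) [Field K]
    [Field Ω] [Algebra K Ω] [IsAlgClosed Ω] (hK : ¬PerfectField K) :
    HasNormalPrimeExtOfFiniteSeparable K Ω := by
  obtain ⟨p, hchar⟩ := CharP.exists K
  obtain hp | rfl := CharP.char_is_prime_or_zero K p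
  swap
  · have := CharP.charP_to_charZero K
    exact absurd PerfectField.ofCharZero hK
  have : Fact p.Prime := ⟨hp⟩
  obtain ⟨a, ha⟩ : ∃ a : K, ∀ b : K, b ^ p ≠ a := by
    by_contra! h
    have : PerfectRing K p := .ofSurjective K p h
    exact hK (PerfectRing.toPerfectField K p)
  let F := (⊥ : IntermediateField K Ω)
  have : CharP F p := charP_of_injective_algebraMap (algebraMap K F).injective p
  have haF : ∀ b : F, b ^ p ≠ algebraMap K F a := fun b hb =>
    ha (botEquiv K Ω b) (by rw [← map_pow, hb, AlgEquiv.commutes, Algebra.algebraMap_self_apply])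
  obtain ⟨y, hy⟩ := IsAlgClosed.exists_pow_nat_eq (algebraMap K Ω a) hp.pos
  obtain ⟨hnormal, hfinrank⟩ := normal_adjoin_simple_and_finrank_eq_of_pow_eq haF
    (y := y) (hy.trans (IsScalarTower.algebraMap_apply K F Ω a))
  exact ⟨p, hp, ⊥, inferInstance, isSeparable_bot K Ω, _, hnormal, hfinrank⟩

theorem stmt_2_general (K : Type*) [Field K] (i : AlgebraicClosure K)
    (hne : IntermediateField.adjoin K ({i} : Set (AlgebraicClosure K)) ≠ ⊤) :
    ∃ p : ℕ, p.Prime ∧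
      ∃ L : IntermediateField K (AlgebraicClosure K),
        FiniteDimensional K L ∧ Algebra.IsSeparable K L ∧
        ∃ M : IntermediateField L (AlgebraicClosure K),
          Normal (↥L) (↥M) ∧ Module.finrank (↥L) (↥M) = p := by
  by_cases hK : PerfectField K
  · have : Algebra.IsSeparable K (AlgebraicClosure K) :=
      Algebra.IsAlgebraic.isSeparable_of_perfectField
    have : IsGalois K (AlgebraicClosure K) := ⟨⟩
    exact hasNormalPrimeExtOfFiniteSeparable_of_isGalois K _ (ne_top_of_le_ne_top hne bot_le)
  · exact hasNormalPrimeExtOfFiniteSeparable_of_not_perfectField K _ hK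

/-- If K(√-1) is not algebraically closed (working inside an algebraic closure Ω of K:
the intermediate field K(i) with i² = -1 is not all of Ω), then there exist a finite
separable extension L/K and a prime p such that L admits a normal extension of
degree p. -/
theorem stmt_2 (K : Type*) [Field K] (i : AlgebraicClosure K) (hi : i ^ 2 = -1)
    (hne : IntermediateField.adjoin K ({i} : Set (AlgebraicClosure K)) ≠ ⊤) :
    ∃ p : ℕ, p.Prime ∧
      ∃ L : IntermediateField K (AlgebraicClosure K),
        FiniteDimensional K L ∧ Algebra.IsSeparable K L ∧
        ∃ M : IntermediateField L (AlgebraicClosure K),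
          Normal (↥L) (↥M) ∧ Module.finrank (↥L) (↥M) = p :=
  stmt_2_general K i hne
end

section
/- Let (K, v) be a valued field with residue characteristic different from a prime p, and suppose K contains a primitive p-th root of unity. If the residue field Kv has a cyclic extension of degree p, then there exists a ∈ 𝒪_v (the valuation ring) such that the splitting field of X^p − a over K is a cyclic extension of degree p of K, and the reduction of X^p − a modulo the maximal ideal m_v is irreducible over Kv. -/
open Polynomial

/-- In a linearly ordered commutative group with zero, an element whose `n`-th power
(`n ≠ 0`) equals `1` must itself be `1`. -/
lemma aux_pow_eq_one {Γ : Type*} [LinearOrderedCommGroupWithZero Γ] {x : Γ} {n : ℕ}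
    (hn : n ≠ 0) (h : x ^ n = 1) : x = 1 := by
  rcases lt_trichotomy x 1 with hx | hx | hx
  · have : x ^ n < 1 := pow_lt_one₀ zero_le' hx hn
    simp [h] at this
  · exact hx
  · have : 1 < x ^ n := one_lt_pow₀ hx hn
    simp [h] at this

/-- Kummer-theoretic lemma: (K,v) valued field, residue characteristic ≠ p,
ζ a primitive p-th root of unity in K, and the residue field Kv has a cyclic
extension ℓ of degree p. Then there is a ∈ 𝒪_v such that the splitting field of
X^p − a over K is cyclic of degree p and the reduction of X^p − a mod m_v is
irreducible over Kv. -/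
theorem stmt_4 (K : Type*) [Field K] (Γ : Type*) [LinearOrderedCommGroupWithZero Γ]
    (v : Valuation K Γ) (p : ℕ) (hp : p.Prime)
    (hreschar : (p : IsLocalRing.ResidueField ↥v.valuationSubring) ≠ 0)
    (ζ : K) (hζ : IsPrimitiveRoot ζ p)
    (ℓ : Type*) [Field ℓ] [Algebra (IsLocalRing.ResidueField ↥v.valuationSubring) ℓ]
    [IsGalois (IsLocalRing.ResidueField ↥v.valuationSubring) ℓ]
    (hcyc : IsCyclic (ℓ ≃ₐ[IsLocalRing.ResidueField ↥v.valuationSubring] ℓ))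
    (hdim : Module.finrank (IsLocalRing.ResidueField ↥v.valuationSubring) ℓ = p) :
    ∃ a : ↥v.valuationSubring,
      IsGalois K (X ^ p - C (a : K)).SplittingField ∧
      IsCyclic ((X ^ p - C (a : K)).SplittingField ≃ₐ[K] (X ^ p - C (a : K)).SplittingField) ∧
      Module.finrank K (X ^ p - C (a : K)).SplittingField = p ∧
      Irreducible ((X ^ p - C a : Polynomial ↥v.valuationSubring).map
        (IsLocalRing.residue ↥v.valuationSubring)) := by
  set O := ↥v.valuationSubring
  set k := IsLocalRing.ResidueField O with hkdef
  have hp0 : p ≠ 0 := hp.ne_zero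
  have hp1 : 1 < p := hp.one_lt
  have hζp : ζ ^ p = 1 := hζ.pow_eq_one
  -- ζ lies in the valuation ring
  have hvζ : v ζ = 1 := aux_pow_eq_one hp0 (by rw [← map_pow, hζp, map_one])
  have hζO : ζ ∈ v.valuationSubring := le_of_eq hvζ
  set ζ₀ : O := ⟨ζ, hζO⟩ with hζ₀def
  set ζb : k := IsLocalRing.residue O ζ₀ with hζbdef
  have hζ₀pow : ζ₀ ^ p = 1 := by
    ext; push_cast; exact hζp
  have hζbpow : ζb ^ p = 1 := by
    rw [hζbdef, ← map_pow, hζ₀pow, map_one]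
  -- ζ̄ ≠ 1 since otherwise p = 0 in the residue field
  have hgeom : (∑ i ∈ Finset.range p, ζb ^ i) = 0 := by
    have h0 : (∑ i ∈ Finset.range p, ζ ^ i) = 0 := hζ.geom_sum_eq_zero hp1
    have h1 : (∑ i ∈ Finset.range p, ζ₀ ^ i) = 0 := by
      have hcoe : ((∑ i ∈ Finset.range p, ζ₀ ^ i : O) : K) = ∑ i ∈ Finset.range p, ζ ^ i := by
        rw [AddSubmonoidClass.coe_finset_sum]
        exact Finset.sum_congr rfl fun i _ => by rw [SubmonoidClass.coe_pow]
      exact Subtype.ext (hcoe.trans h0)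
    rw [hζbdef]
    simp_rw [← map_pow]
    rw [← map_sum, h1, map_zero]
  have hζbne : ζb ≠ 1 := by
    intro h
    apply hreschar
    rw [h] at hgeom
    simp only [one_pow, Finset.sum_const, Finset.card_range, nsmul_eq_mul, mul_one] at hgeom
    exact hgeom
  -- ζ̄ is a primitive p-th root of unity in k
  have hζbprim : IsPrimitiveRoot ζb p := by
    have hd : orderOf ζb ∣ p := orderOf_dvd_of_pow_eq_one hζbpow
    rcases (Nat.Prime.eq_one_or_self_of_dvd hp _ hd) with h1 | h1
    · exact absurd (orderOf_eq_one_iff.mp h1) hζbne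
    · exact h1 ▸ IsPrimitiveRoot.orderOf ζb
  have hKp : (primitiveRoots p K).Nonempty := ⟨ζ, (mem_primitiveRoots hp.pos).mpr hζ⟩
  have hkp : (primitiveRoots p k).Nonempty := ⟨ζb, (mem_primitiveRoots hp.pos).mpr hζbprim⟩
  -- Kummer theory over the residue field produces `b`
  have : FiniteDimensional k ℓ := FiniteDimensional.of_finrank_pos (by rw [hdim]; exact hp.pos : 0 < Module.finrank k ℓ)
  have hkp' : (primitiveRoots (Module.finrank k ℓ) k).Nonempty := by rw [hdim]; exact hkp
  have htfae := isCyclic_tfae k ℓ hkp'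
  have h12 := htfae.out 0 1
  obtain ⟨b, hb_irr, -⟩ := h12.mp ⟨inferInstance, hcyc⟩
  rw [hdim] at hb_irr
  have hbnp : ∀ d : k, d ^ p ≠ b := (X_pow_sub_C_irreducible_iff_of_prime hp).mp hb_irr
  -- lift b to the valuation ring
  obtain ⟨a, ha⟩ := IsLocalRing.residue_surjective (R := O) b
  -- a is a unit, so v a = 1
  have hbne : b ≠ 0 := fun h => hbnp 0 (by rw [h, zero_pow hp0])
  have haunit : IsUnit a := by
    rw [← IsLocalRing.notMem_maximalIdeal]
    intro h
    exact hbne (ha ▸ (Ideal.Quotient.eq_zero_iff_mem.mpr h))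
  have hva : v (a : K) = 1 := by
    obtain ⟨u, rfl⟩ := haunit
    have h0 : ((u : O) * ((u⁻¹ : Oˣ) : O)) = 1 := u.mul_inv
    have h1 : ((u : O) : K) * (((u⁻¹ : Oˣ) : O) : K) = 1 := by
      rw [← MulMemClass.coe_mul, h0, OneMemClass.coe_one]
    have h2 : v ((u : O) : K) * v (((u⁻¹ : Oˣ) : O) : K) = 1 := by
      rw [← map_mul, h1, map_one]
    have h3 : v ((u : O) : K) ≤ 1 := (u : O).2
    have h4 : v (((u⁻¹ : Oˣ) : O) : K) ≤ 1 := ((u⁻¹ : Oˣ) : O).2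
    refine le_antisymm h3 ?_
    calc (1 : Γ) = v ((u : O) : K) * v (((u⁻¹ : Oˣ) : O) : K) := h2.symm
    _ ≤ v ((u : O) : K) * 1 := mul_le_mul_right h4 _
    _ = v ((u : O) : K) := mul_one _
  -- no p-th root of a in K
  have hnr : ∀ c : K, c ^ p ≠ (a : K) := by
    intro c hc
    have hvc : v c = 1 := aux_pow_eq_one hp0 (by rw [← map_pow, hc, hva])
    have hcO : c ∈ v.valuationSubring := le_of_eq hvc
    have hc0 : (⟨c, hcO⟩ : O) ^ p = a := by ext; push_cast; exact hc
    exact hbnp (IsLocalRing.residue O ⟨c, hcO⟩) (by rw [← map_pow, hc0, ha])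
  have : NeZero p := ⟨hp0⟩
  have H : Irreducible (X ^ p - C (a : K)) := X_pow_sub_C_irreducible_of_prime hp hnr
  refine ⟨a, isGalois_of_isSplittingField_X_pow_sub_C hKp H _,
    isCyclic_of_isSplittingField_X_pow_sub_C hKp H _,
    finrank_of_isSplittingField_X_pow_sub_C hKp H _, ?_⟩
  have hmap : (X ^ p - C a : Polynomial O).map (IsLocalRing.residue O) = X ^ p - C b := by
    rw [Polynomial.map_sub, Polynomial.map_pow, Polynomial.map_X, Polynomial.map_C, ha]
  rw [hmap]
  exact hb_irr
end
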